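/- Fix an integer n ≥ 2, set b := -n + i, and let D ⊆ {0, 1, …, n²} be such that Δ := D − D is sparse. Let (α_j)_{j≥1} be a sequence with α_j ∈ Δ for all j, set α := π((α_j)), and let C(α) := C_{n,D} ∩ (C_{n,D} + α). Suppose there exist a positive integer p, N ≥ 1, and complex numbers v_1, …, v_N such that, with f_i(x) := b^{-p} x + v_i, one has C(α) = ⋃_{i=1}^N f_i(C(α)). Then there exists β = π((β_j)) ∈ C(α) with β_j ∈ D ∩ (D + α_j) for all j such that the sequence of sets ((D ∩ (D + α_j)) − β_j)_{j≥1} is strongly eventually periodic (SEP). -/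

import Mathlib

open Complex Filter Pointwise

/-- `piSum b d = ∑_{j≥1} d_j b^{-j}` (0-indexed: `d j` is the `(j+1)`-st digit). -/
noncomputable def piSum (b : ℂ) (d : ℕ → ℤ) : ℂ :=
  ∑' j : ℕ, (d j : ℂ) * b ^ (-((j : ℤ) + 1))

/-- The restricted digit set `C_{n,D}`. -/
def restrictedDigitSet (n : ℕ) (D : Set ℤ) : Set ℂ :=
  {z | ∃ d : ℕ → ℤ, (∀ j, d j ∈ D) ∧ z = piSum (-(n : ℂ) + Complex.I) d}

/-- `Δ` is sparse: all distinct pairs differ by more than `2` when `n ≥ 5`,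
and by more than `3` when `n ∈ {2, 3, 4}`. -/
def Sparse (n : ℕ) (Δ : Set ℤ) : Prop :=
  ∀ δ ∈ Δ, ∀ δ' ∈ Δ, δ ≠ δ' →
    (5 ≤ n → 2 < |δ - δ'|) ∧ (n = 2 ∨ n = 3 ∨ n = 4 → 3 < |δ - δ'|)

/-- A sequence `(A_j)_{j≥1}` of nonempty subsets of `ℤ` (0-indexed here) is strongly
eventually periodic. -/
def SEPSets (A : ℕ → Set ℤ) : Prop :=
  ∃ p : ℕ, 0 < p ∧ ∃ B C : ℕ → Set ℤ,
    (∀ ℓ < p, (B ℓ).Nonempty ∧ (B ℓ).Finite ∧ (C ℓ).Nonempty ∧ (C ℓ).Finite) ∧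
    (∀ j < p, A j = B j) ∧ (∀ j, p ≤ j → A j = B (j % p) + C (j % p))

/-!
Write `b = -n + i` and `A_j = D ∩ (D + α_j)`. Sparseness makes `π` injective on sequences with
digits in `D - D`. Indeed, let `π(γ) = 0` with `|γ_j| ≤ 2n²` and each `γ_j` either zero or larger
than the sparseness gap. The Gaussian integers `s_k = -b^k (γ_1 b^{-1} + ⋯ + γ_k b^{-k})` are
the tails of `π(γ)`, hence bounded; since `s_{k+1} = b s_k - γ_{k+1}` strictly increases
`|Im s_k|` once it is large, all `Im s_k` stay small, and starting from `s_0 = 0` this forces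
every `γ_j = 0`.
Consequently `C(α) = π(∏ A_j)`, and comparing digits of `f_i(π c)` for different `c` shows that
`f_i` shifts digit sequences by `p` places up to a fixed correction. This gives
`A_{j+p} = A_j + T_j` with finite `T_j`. As all `A_j` lie in `[0, n²]`, their spreads are
bounded, so `T_j` is eventually a singleton and, along each residue class, the `A_j` are
eventually translates of each other, which is the strong eventual periodicity.
-/

section DigitExpansion

variable {b : ℂ} {M : ℤ} {d e : ℕ → ℤ}

lemma zpow_neg_natCast_add_one (j : ℕ) : b ^ (-((j : ℤ) + 1)) = (b ^ (j + 1))⁻¹ := by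
  rw [zpow_neg, ← Nat.cast_add_one, zpow_natCast]

lemma norm_digit_term_le (hd : ∀ j, |d j| ≤ M) (j : ℕ) :
    ‖(d j : ℂ) * b ^ (-((j : ℤ) + 1))‖ ≤ M * ‖b‖⁻¹ * ‖b‖⁻¹ ^ j := by
  rw [norm_mul, zpow_neg_natCast_add_one, norm_inv, norm_pow, ← inv_pow, pow_succ',
    Complex.norm_intCast, ← mul_assoc]
  gcongr
  exact_mod_cast hd j

lemma hasSum_geometric_digit_bound (hb : 1 < ‖b‖) (M : ℤ) :
    HasSum (fun j : ℕ => M * ‖b‖⁻¹ * ‖b‖⁻¹ ^ j) (M / (‖b‖ - 1)) := by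
  have hb1 : ‖b‖ - 1 ≠ 0 := sub_ne_zero.mpr hb.ne'
  have h := (hasSum_geometric_of_lt_one (by positivity) (inv_lt_one_of_one_lt₀ hb)).mul_left
    ((M : ℝ) * ‖b‖⁻¹)
  rwa [show (M : ℝ) * ‖b‖⁻¹ * (1 - ‖b‖⁻¹)⁻¹ = M / (‖b‖ - 1) by field_simp] at h

lemma summable_digits (hb : 1 < ‖b‖) (hd : ∀ j, |d j| ≤ M) :
    Summable fun j : ℕ => (d j : ℂ) * b ^ (-((j : ℤ) + 1)) :=
  .of_norm_bounded (hasSum_geometric_digit_bound hb M).summable (norm_digit_term_le hd)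

lemma norm_piSum_le (hb : 1 < ‖b‖) (hd : ∀ j, |d j| ≤ M) : ‖piSum b d‖ ≤ M / (‖b‖ - 1) :=
  tsum_of_norm_bounded (hasSum_geometric_digit_bound hb M) (norm_digit_term_le hd)

lemma piSum_sub (hb : 1 < ‖b‖) (hd : ∀ j, |d j| ≤ M) (he : ∀ j, |e j| ≤ M) :
    piSum b (d - e) = piSum b d - piSum b e := by
  rw [piSum, piSum, piSum, ← (summable_digits hb hd).tsum_sub (summable_digits hb he)]
  congr 1 with j
  push_cast [Pi.sub_apply]
  ring

lemma mul_piSum (hb : 1 < ‖b‖) (hd : ∀ j, |d j| ≤ M) :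
    b * piSum b d = d 0 + piSum b (fun j => d (j + 1)) := by
  have hb0 : b ≠ 0 := norm_pos_iff.mp (by linarith)
  rw [piSum, (summable_digits hb hd).tsum_eq_zero_add, mul_add, ← tsum_mul_left, piSum]
  congr 1
  · rw [zpow_neg_natCast_add_one]
    field_simp
    ring
  · congr 1 with j
    rw [zpow_neg_natCast_add_one, zpow_neg_natCast_add_one]
    field_simp
    ring

lemma piSum_shift (hb : 1 < ‖b‖) (hd : ∀ j, |d j| ≤ M) (p : ℕ) :
    piSum b (fun j => if p ≤ j then d (j - p) else 0) = b ^ (-(p : ℤ)) * piSum b d := by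
  have hb0 : b ≠ 0 := norm_pos_iff.mp (by linarith)
  have hM : 0 ≤ M := (abs_nonneg _).trans (hd 0)
  induction p with
  | zero => simp
  | succ p ih =>
    have hshift := mul_piSum hb (d := fun j => if p + 1 ≤ j then d (j - (p + 1)) else 0)
      (M := M) fun j => by split_ifs <;> simp [hd, hM]
    simp only [Nat.add_le_add_iff_right, Nat.add_sub_add_right, nonpos_iff_eq_zero,
      Nat.add_one_ne_zero, if_false, Int.cast_zero, zero_add, ih] at hshift
    rw [eq_inv_mul_iff_mul_eq₀ hb0 |>.mpr hshift]
    push_cast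
    rw [neg_add, zpow_add₀ hb0, zpow_neg_one]
    ring

end DigitExpansion

section Carry

open GaussianInt

variable (n : ℕ) {γ : ℕ → ℤ}

def gaussBase : GaussianInt := ⟨-n, 1⟩

lemma gaussBase_toComplex : (gaussBase n : ℂ) = -(n : ℂ) + I := by
  simp [gaussBase, toComplex_def']

lemma normSq_base : Complex.normSq (-(n : ℂ) + I) = (n : ℝ) ^ 2 + 1 := by
  simp [Complex.normSq_apply]
  ring

lemma one_lt_norm_base (hn : 1 ≤ n) : 1 < ‖-(n : ℂ) + I‖ := by
  have hsq := normSq_base n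
  rw [Complex.normSq_eq_norm_sq] at hsq
  have : (1 : ℝ) ≤ n := by exact_mod_cast hn
  nlinarith [norm_nonneg (-(n : ℂ) + I)]

/-- `b ^ k` times the `k`-th partial sum of `-π(γ)`, as a Gaussian integer. -/
def carry (γ : ℕ → ℤ) : ℕ → GaussianInt
  | 0 => 0
  | k + 1 => gaussBase n * carry γ k - γ k

@[simp] lemma carry_zero : carry n γ 0 = 0 := rfl

@[simp] lemma carry_succ_re (k : ℕ) :
    (carry n γ (k + 1)).re = -n * (carry n γ k).re - (carry n γ k).im - γ k := by
  simp [carry, gaussBase]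
  ring

@[simp] lemma carry_succ_im (k : ℕ) :
    (carry n γ (k + 1)).im = (carry n γ k).re - n * (carry n γ k).im := by
  simp [carry, gaussBase]
  ring

lemma carry_eq_piSum_tail (hn : 1 ≤ n) {M : ℤ} (hγ : ∀ j, |γ j| ≤ M)
    (h0 : piSum (-(n : ℂ) + I) γ = 0) (k : ℕ) :
    (carry n γ k : ℂ) = piSum (-(n : ℂ) + I) (fun j => γ (j + k)) := by
  induction k with
  | zero => simpa using h0.symm
  | succ k ih =>
    have hshift := mul_piSum (one_lt_norm_base n hn) (d := fun j => γ (j + k)) fun j => hγ _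
    simp only [zero_add, add_right_comm _ 1 k] at hshift
    rw [carry, toComplex_sub, toComplex_mul, gaussBase_toComplex, ih, hshift]
    simp [add_assoc]

lemma carry_normSq_le (hn : 2 ≤ n) (hγ : ∀ j, |γ j| ≤ 2 * n ^ 2)
    (h0 : piSum (-(n : ℂ) + I) γ = 0) (k : ℕ) :
    (carry n γ k).re ^ 2 + (carry n γ k).im ^ 2 ≤ 4 * n ^ 2 + 8 * n + 10 := by
  have hb := one_lt_norm_base n (by omega)
  set s := ‖-(n : ℂ) + I‖
  have hs : s ^ 2 = n ^ 2 + 1 := by rw [← Complex.normSq_eq_norm_sq, normSq_base]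
  have hn' : (2 : ℝ) ≤ n := by exact_mod_cast hn
  have hsn : s ≤ n + 1 / 4 := by nlinarith
  -- the tail bound `2n² / (|b| - 1)` simplifies to `2|b| + 2` because `|b|² - 1 = n²`
  have htail : ‖(carry n γ k : ℂ)‖ ≤ 2 * s + 2 := by
    calc ‖(carry n γ k : ℂ)‖ ≤ ((2 * n ^ 2 : ℤ) : ℝ) / (s - 1) := by
          rw [carry_eq_piSum_tail n (by omega) hγ h0]
          exact norm_piSum_le hb fun j => hγ (j + k)
      _ = 2 * s + 2 := by
          rw [div_eq_iff (by linarith)]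
          push_cast
          linear_combination -2 * hs
  have hnormSq : ‖(carry n γ k : ℂ)‖ ^ 2 = (carry n γ k).re ^ 2 + (carry n γ k).im ^ 2 := by
    rw [← Complex.normSq_eq_norm_sq, ← intCast_real_norm, Zsqrtd.norm_def]
    push_cast
    ring
  have : ((carry n γ k).re ^ 2 + (carry n γ k).im ^ 2 : ℝ) ≤ 4 * n ^ 2 + 8 * n + 10 := by
    rw [← hnormSq]
    nlinarith [norm_nonneg (carry n γ k : ℂ)]
  exact_mod_cast this

/-- Once the imaginary part of a carry reaches `escapeBound n`, it grows at every step. -/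
def escapeBound (n : ℕ) : ℤ := if n = 2 then 5 else if n ≤ 4 then 4 else 3

def sparseGap (n : ℕ) : ℤ := if n ≤ 4 then 3 else 2

lemma abs_lt_abs_sub_mul (hn : 2 ≤ n) {X Y : ℤ} (hR : X ^ 2 + Y ^ 2 ≤ 4 * n ^ 2 + 8 * n + 10)
    (hY : escapeBound n ≤ |Y|) : |Y| < |X - n * Y| := by
  by_contra! h
  have hXY : (n - 1) * |Y| ≤ |X| := by
    have := abs_sub_abs_le_abs_sub (n * Y) X
    rw [abs_mul, abs_sub_comm, Nat.abs_cast] at this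
    linarith
  have hsq : ((n - 1) * |Y|) ^ 2 ≤ X ^ 2 := by
    rw [← sq_abs X]
    exact pow_le_pow_left₀ (mul_nonneg (by omega) (abs_nonneg _)) hXY 2
  have hY2 : escapeBound n ^ 2 ≤ |Y| ^ 2 :=
    pow_le_pow_left₀ (by unfold escapeBound; split_ifs <;> norm_num) hY 2
  rw [← sq_abs Y] at hR
  have hprod : (n - 1 : ℤ) ^ 2 * escapeBound n ^ 2 ≤ (n - 1) ^ 2 * |Y| ^ 2 :=
    mul_le_mul_of_nonneg_left hY2 (sq_nonneg _)
  rcases (by omega : n = 2 ∨ n = 3 ∨ n = 4 ∨ 5 ≤ n) with rfl | rfl | rfl | h5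
  iterate 3 norm_num [escapeBound] at hY2 hprod hsq hR; nlinarith [sq_abs Y]
  simp only [escapeBound, if_neg (show n ≠ 2 by omega), if_neg (show ¬n ≤ 4 by omega)] at hprod
  have h5' : (5 : ℤ) ≤ n := by exact_mod_cast h5
  nlinarith

lemma abs_carry_im_lt (hn : 2 ≤ n)
    (hbd : ∀ k, (carry n γ k).re ^ 2 + (carry n γ k).im ^ 2 ≤ 4 * n ^ 2 + 8 * n + 10) (k : ℕ) :
    |(carry n γ k).im| < escapeBound n := by
  by_contra! hk
  have hgrow : ∀ i : ℕ, |(carry n γ k).im| + i ≤ |(carry n γ (k + i)).im| := by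
    intro i
    induction i with
    | zero => simp
    | succ i ih =>
      have := abs_lt_abs_sub_mul n hn (hbd (k + i)) (by omega)
      rw [← add_assoc, carry_succ_im]
      push_cast
      omega
  set R : ℤ := 4 * n ^ 2 + 8 * n + 10
  have hR : 0 ≤ R := by positivity
  have hfar := hgrow R.toNat
  have hsq := hbd (k + R.toNat)
  rw [Int.toNat_of_nonneg hR] at hfar
  have hpos : 0 < escapeBound n := by unfold escapeBound; split_ifs <;> norm_num
  nlinarith [sq_abs (carry n γ (k + R.toNat)).im, sq_nonneg (carry n γ (k + R.toNat)).re]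

lemma carry_eq_zero (hγ : ∀ j, |γ j| ≤ 2 * n ^ 2) (hgap : ∀ j, γ j = 0 ∨ sparseGap n < |γ j|)
    (him : ∀ k, |(carry n γ k).im| < escapeBound n) (k : ℕ) : carry n γ k = 0 := by
  induction k with
  | zero => rfl
  | succ k ih =>
    have h2 : (carry n γ (k + 2)).im = -γ k := by simp [ih]
    have h3 : (carry n γ (k + 3)).im = 2 * n * γ k - γ (k + 1) := by simp [ih]; ring
    have hk : γ k = 0 := by
      have hk2 := him (k + 2)
      have hk3 := him (k + 3)
      have hγ1 := hγ (k + 1)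
      have hgapk := hgap k
      rw [h2] at hk2
      rw [h3] at hk3
      rw [abs_neg] at hk2
      rcases eq_or_ne n 2 with rfl | hn2
      · norm_num [escapeBound, sparseGap, abs_lt, abs_le, lt_abs] at hk2 hk3 hγ1 hgapk
        omega
      · simp only [escapeBound, sparseGap, hn2, if_false] at hk2 hgapk
        simp only [abs_lt, lt_abs] at hk2 hgapk
        split_ifs at hk2 hgapk <;> omega
    ext <;> simp [ih, hk]

theorem eq_zero_of_piSum_eq_zero (hn : 2 ≤ n) (hγ : ∀ j, |γ j| ≤ 2 * n ^ 2)
    (hgap : ∀ j, γ j = 0 ∨ sparseGap n < |γ j|) (h0 : piSum (-(n : ℂ) + I) γ = 0) : γ = 0 := by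
  have hcarry := carry_eq_zero n hγ hgap (abs_carry_im_lt n hn (carry_normSq_le n hn hγ h0))
  funext j
  simpa [hcarry j] using congrArg Zsqrtd.re (hcarry (j + 1))

end Carry

lemma mem_add_singleton_iff {D : Set ℤ} {a c : ℤ} : a ∈ D + {c} ↔ a - c ∈ D := by
  simp [Set.add_singleton, Set.image_add_right, sub_eq_add_neg]

lemma Sparse.sparseGap_lt_abs_sub {n : ℕ} {Δ : Set ℤ} (h : Sparse n Δ) (hn : 2 ≤ n) {δ δ' : ℤ}
    (hδ : δ ∈ Δ) (hδ' : δ' ∈ Δ) (hne : δ ≠ δ') : sparseGap n < |δ - δ'| := by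
  unfold sparseGap
  split_ifs
  · exact (h δ hδ δ' hδ' hne).2 (by omega)
  · exact (h δ hδ δ' hδ' hne).1 (by omega)

section RestrictedDigits

variable {n : ℕ} {D : Set ℤ}

lemma abs_le_of_mem (hD : D ⊆ Set.Icc 0 ((n : ℤ) ^ 2)) {d : ℤ} (hd : d ∈ D) :
    |d| ≤ (n : ℤ) ^ 2 := by
  rw [abs_le]
  constructor <;> linarith [(hD hd).1, (hD hd).2]

lemma inter_add_singleton_nonempty {c : ℤ} (hc : c ∈ D - D) : (D ∩ (D + {c})).Nonempty := by
  obtain ⟨x, hx, y, hy, rfl⟩ := hc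
  exact ⟨x, hx, mem_add_singleton_iff.mpr (by rwa [sub_sub_cancel])⟩

lemma abs_le_of_mem_sub (hD : D ⊆ Set.Icc 0 ((n : ℤ) ^ 2)) {δ : ℤ} (hδ : δ ∈ D - D) :
    |δ| ≤ (n : ℤ) ^ 2 := by
  obtain ⟨x, hx, y, hy, rfl⟩ := hδ
  rw [abs_le]
  constructor <;> linarith [(hD hx).1, (hD hx).2, (hD hy).1, (hD hy).2]

theorem piSum_injOn_sub (hn : 2 ≤ n) (hD : D ⊆ Set.Icc 0 ((n : ℤ) ^ 2))
    (hsparse : Sparse n (D - D)) :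
    Set.InjOn (piSum (-(n : ℂ) + I)) (Set.univ.pi fun _ => D - D) := by
  intro δ hδ δ' hδ' h
  rw [Set.mem_univ_pi] at hδ hδ'
  have hbd := fun j => abs_le_of_mem_sub hD (hδ j)
  have hbd' := fun j => abs_le_of_mem_sub hD (hδ' j)
  refine sub_eq_zero.mp (eq_zero_of_piSum_eq_zero n hn (fun j => ?_) (fun j => ?_) ?_)
  · calc |δ j - δ' j| ≤ |δ j| + |δ' j| := abs_sub _ _
      _ ≤ 2 * n ^ 2 := by linarith [hbd j, hbd' j]
  · by_cases hj : δ j = δ' j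
    · simp [hj]
    · exact .inr (hsparse.sparseGap_lt_abs_sub hn (hδ j) (hδ' j) hj)
  · rw [piSum_sub (one_lt_norm_base n (by omega)) hbd hbd', h, sub_self]

theorem piSum_injOn (hn : 2 ≤ n) (hD : D ⊆ Set.Icc 0 ((n : ℤ) ^ 2))
    (hsparse : Sparse n (D - D)) :
    Set.InjOn (piSum (-(n : ℂ) + I)) (Set.univ.pi fun _ => D) := by
  intro c hc c' hc' h
  rw [Set.mem_univ_pi] at hc hc'
  have hb := one_lt_norm_base n (by omega)
  have hsub : c - c' ∈ Set.univ.pi fun _ => D - D :=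
    Set.mem_univ_pi.mpr fun j => Set.sub_mem_sub (hc j) (hc' j)
  have hzero : (0 : ℕ → ℤ) ∈ Set.univ.pi fun _ => D - D :=
    Set.mem_univ_pi.mpr fun _ => ⟨c 0, hc 0, c 0, hc 0, sub_self _⟩
  refine sub_eq_zero.mp (piSum_injOn_sub hn hD hsparse hsub hzero ?_)
  rw [piSum_sub hb (fun j => abs_le_of_mem hD (hc j)) (fun j => abs_le_of_mem hD (hc' j)), h,
    sub_self]
  simp [piSum]

theorem restrictedDigitSet_inter_add_eq (hn : 2 ≤ n) (hD : D ⊆ Set.Icc 0 ((n : ℤ) ^ 2))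
    (hsparse : Sparse n (D - D)) {α : ℕ → ℤ} (hα : ∀ j, α j ∈ D - D) :
    restrictedDigitSet n D ∩ (restrictedDigitSet n D + {piSum (-(n : ℂ) + I) α}) =
      piSum (-(n : ℂ) + I) '' Set.univ.pi fun j => D ∩ (D + {α j}) := by
  have hb := one_lt_norm_base n (by omega)
  have hαbd := fun j => abs_le_of_mem_sub hD (hα j)
  ext z
  constructor
  · rintro ⟨⟨d, hd, rfl⟩, _, ⟨e, he, rfl⟩, _, rfl, hde⟩
    simp only at hde
    have hde' : d - e ∈ Set.univ.pi fun _ => D - D :=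
      Set.mem_univ_pi.mpr fun j => Set.sub_mem_sub (hd j) (he j)
    have hdα : d - e = α := piSum_injOn_sub hn hD hsparse hde' (Set.mem_univ_pi.mpr hα)
      (by rw [piSum_sub hb (fun j => abs_le_of_mem hD (hd j)) (fun j => abs_le_of_mem hD (he j)),
        ← hde, add_sub_cancel_left])
    refine ⟨d, Set.mem_univ_pi.mpr fun j => ⟨hd j, mem_add_singleton_iff.mpr ?_⟩, rfl⟩
    rw [← hdα, Pi.sub_apply, sub_sub_cancel]
    exact he j
  · rintro ⟨c, hc, rfl⟩
    rw [Set.mem_univ_pi] at hc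
    have hcα : ∀ j, (c - α) j ∈ D := fun j => mem_add_singleton_iff.mp (hc j).2
    refine ⟨⟨c, fun j => (hc j).1, rfl⟩, _, ⟨c - α, hcα, rfl⟩, _, rfl, ?_⟩
    rw [piSum_sub hb (fun j => abs_le_of_mem hD (hc j).1) hαbd]
    exact sub_add_cancel _ _

end RestrictedDigits

section SelfSimilar

open Set Function

variable {n : ℕ} {D : Set ℤ}

theorem sub_shift_of_piSum_eq (hn : 2 ≤ n) (hD : D ⊆ Icc 0 ((n : ℤ) ^ 2))
    (hsparse : Sparse n (D - D)) {c c' u u' : ℕ → ℤ} (hc : ∀ j, c j ∈ D) (hc' : ∀ j, c' j ∈ D)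
    (hu : ∀ j, u j ∈ D) (hu' : ∀ j, u' j ∈ D) {p : ℕ} {w : ℂ}
    (h : piSum (-(n : ℂ) + I) u = (-(n : ℂ) + I) ^ (-(p : ℤ)) * piSum (-(n : ℂ) + I) c + w)
    (h' : piSum (-(n : ℂ) + I) u' = (-(n : ℂ) + I) ^ (-(p : ℤ)) * piSum (-(n : ℂ) + I) c' + w)
    (j : ℕ) : u (j + p) - u' (j + p) = c j - c' j := by
  have hb := one_lt_norm_base n (by omega)
  have hbd := fun (d : ℕ → ℤ) (hd : ∀ j, d j ∈ D) j => abs_le_of_mem hD (hd j)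
  have hdiff : u - u' ∈ univ.pi fun _ => D - D := fun m _ => sub_mem_sub (hu m) (hu' m)
  have hshift : (fun m => if p ≤ m then (c - c') (m - p) else 0) ∈ univ.pi fun _ => D - D := by
    intro m _
    dsimp only
    split_ifs
    · exact sub_mem_sub (hc _) (hc' _)
    · exact ⟨c 0, hc 0, c 0, hc 0, sub_self _⟩
  have hsub_bd : ∀ m, |(c - c') m| ≤ (n : ℤ) ^ 2 :=
    fun m => abs_le_of_mem_sub hD (sub_mem_sub (hc m) (hc' m))
  have hshift_eq := piSum_injOn_sub hn hD hsparse hdiff hshift (by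
    rw [piSum_sub hb (hbd u hu) (hbd u' hu'), piSum_shift hb hsub_bd,
      piSum_sub hb (hbd c hc) (hbd c' hc'), h, h']
    ring)
  simpa using congrFun hshift_eq (j + p)

theorem exists_add_eq_of_selfSimilar (hn : 2 ≤ n) (hD : D ⊆ Icc 0 ((n : ℤ) ^ 2))
    (hsparse : Sparse n (D - D)) {A : ℕ → Set ℤ} (hAD : ∀ j, A j ⊆ D)
    (hA : ∀ j, (A j).Nonempty) {p N : ℕ} {v : Fin N → ℂ}
    (hself : piSum (-(n : ℂ) + I) '' univ.pi A = ⋃ i : Fin N,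
      (fun x => (-(n : ℂ) + I) ^ (-(p : ℤ)) * x + v i) '' (piSum (-(n : ℂ) + I) '' univ.pi A)) :
    ∃ T : ℕ → Set ℤ, (∀ j, (T j).Finite) ∧ ∀ j, A (j + p) = A j + T j := by
  classical
  set b : ℂ := -(n : ℂ) + I
  have hpiD : ∀ c ∈ univ.pi A, ∀ j, c j ∈ D := fun c hc j => hAD j (hc j (mem_univ j))
  have hmaps : ∀ (i : Fin N) (c : ℕ → ℤ), ∃ c', c ∈ univ.pi A →
      c' ∈ univ.pi A ∧ piSum b c' = b ^ (-(p : ℤ)) * piSum b c + v i := by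
    intro i c
    by_cases hc : c ∈ univ.pi A
    · obtain ⟨c', hc', h⟩ : b ^ (-(p : ℤ)) * piSum b c + v i ∈ piSum b '' univ.pi A :=
        hself ▸ mem_iUnion.mpr ⟨i, _, ⟨c, hc, rfl⟩, rfl⟩
      exact ⟨c', fun _ => ⟨hc', h⟩⟩
    · exact ⟨c, fun h => absurd h hc⟩
  choose Ψ hΨ using hmaps
  have hΨ_sub : ∀ i, ∀ c ∈ univ.pi A, ∀ c' ∈ univ.pi A, ∀ j,
      Ψ i c (j + p) - Ψ i c' (j + p) = c j - c' j := fun i c hc c' hc' =>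
    sub_shift_of_piSum_eq hn hD hsparse (hpiD c hc) (hpiD c' hc') (hpiD _ (hΨ i c hc).1)
      (hpiD _ (hΨ i c' hc').1) (hΨ i c hc).2 (hΨ i c' hc').2
  obtain ⟨c₀, hc₀⟩ : ∃ c₀ : ℕ → ℤ, c₀ ∈ univ.pi A :=
    ⟨fun j => (hA j).some, fun j _ => (hA j).some_mem⟩
  refine ⟨fun j => range fun i => Ψ i c₀ (j + p) - c₀ j, fun j => finite_range _, fun j => ?_⟩
  ext z
  constructor
  · intro hz
    have hc : update c₀ (j + p) z ∈ univ.pi A := (update_mem_pi_iff_of_mem hc₀).mpr fun _ => hz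
    obtain ⟨i, _, ⟨c, hcA, rfl⟩, hc_eq⟩ := mem_iUnion.mp (hself ▸ ⟨_, hc, rfl⟩ :
      piSum b (update c₀ (j + p) z) ∈ ⋃ i : Fin N,
        (fun x => b ^ (-(p : ℤ)) * x + v i) '' (piSum b '' univ.pi A))
    have hΨc := hΨ i c hcA
    have h := piSum_injOn hn hD hsparse (fun m _ => hpiD _ hc m) (fun m _ => hpiD _ hΨc.1 m)
      (hΨc.2 ▸ hc_eq.symm)
    have hz' := congrFun h (j + p)
    rw [update_self] at hz'
    refine ⟨c j, hcA j (mem_univ j), _, ⟨i, rfl⟩, ?_⟩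
    have := hΨ_sub i c hcA c₀ hc₀ j
    dsimp only
    omega
  · rintro ⟨a, ha, _, ⟨i, rfl⟩, rfl⟩
    have hc : update c₀ j a ∈ univ.pi A := (update_mem_pi_iff_of_mem hc₀).mpr fun _ => ha
    have h := hΨ_sub i _ hc c₀ hc₀ j
    rw [update_self] at h
    convert (hΨ i _ hc).1 (j + p) (mem_univ _) using 1
    dsimp only
    omega

end SelfSimilar

section StronglyEventuallyPeriodic

open Set

lemma add_add_singleton_sub_singleton (X Y : Set ℤ) (x y t : ℤ) :
    X + Y + {t} - {x + y + t} = (X - {x}) + (Y - {y}) := by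
  simp only [sub_eq_add_neg, neg_singleton]
  rw [add_add_add_comm, singleton_add_singleton, add_assoc, singleton_add_singleton]
  congr 2
  ring

noncomputable def spread (S : Set ℤ) : ℤ := sSup S - sInf S

lemma spread_add {S T : Set ℤ} (hS : S.Nonempty) (hS' : S.Finite) (hT : T.Nonempty)
    (hT' : T.Finite) : spread (S + T) = spread S + spread T := by
  rw [spread, spread, spread, csSup_add hS hS'.bddAbove hT hT'.bddAbove,
    csInf_add hS hS'.bddBelow hT hT'.bddBelow]
  ring

lemma spread_nonneg {S : Set ℤ} (hS : S.Nonempty) (hS' : S.Finite) : 0 ≤ spread S :=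
  sub_nonneg.mpr (csInf_le_csSup hS hS'.bddBelow hS'.bddAbove)

lemma spread_le {S : Set ℤ} {a b : ℤ} (hS : S.Nonempty) (hSab : S ⊆ Icc a b) :
    spread S ≤ b - a := by
  have hfin := (finite_Icc a b).subset hSab
  have hsup := hSab (hS.csSup_mem hfin)
  have hinf := hSab (hS.csInf_mem hfin)
  rw [spread]
  linarith [hsup.2, hinf.1]

lemma exists_eq_singleton_of_spread_eq_zero {S : Set ℤ} (hS : S.Nonempty) (hS' : S.Finite)
    (h : spread S = 0) : ∃ t, S = {t} := by
  refine ⟨sSup S, eq_singleton_iff_unique_mem.mpr ⟨hS.csSup_mem hS', fun x hx => ?_⟩⟩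
  have := le_csSup hS'.bddAbove hx
  have := csInf_le hS'.bddBelow hx
  rw [spread] at h
  omega

lemma Monotone.exists_forall_ge_eq {f : ℕ → ℤ} (hf : Monotone f) {M : ℤ} (hM : ∀ k, f k ≤ M) :
    ∃ J, ∀ k ≥ J, f k = f J := by
  obtain ⟨_, ⟨J, rfl⟩, hmax⟩ := Int.exists_greatest_of_bdd (P := (· ∈ range f))
    ⟨M, by rintro _ ⟨k, rfl⟩; exact hM k⟩ ⟨f 0, 0, rfl⟩
  exact ⟨J, fun k hk => le_antisymm (hmax _ ⟨k, rfl⟩) (hf hk)⟩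

variable {A T : ℕ → Set ℤ} {p : ℕ}

lemma nonempty_of_add_eq (hA : ∀ j, (A j).Nonempty) (hsum : ∀ j, A (j + p) = A j + T j)
    (j : ℕ) : (T j).Nonempty := by
  obtain ⟨_, hx⟩ := hA (j + p)
  rw [hsum] at hx
  obtain ⟨_, _, t, ht, _⟩ := hx
  exact ⟨t, ht⟩

lemma exists_eq_add_of_add_eq (hT : ∀ j, (T j).Finite) (hTne : ∀ j, (T j).Nonempty)
    (hsum : ∀ j, A (j + p) = A j + T j) (ℓ k : ℕ) :
    ∃ S : Set ℤ, S.Finite ∧ S.Nonempty ∧ A (ℓ + k * p) = A ℓ + S := by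
  induction k with
  | zero => exact ⟨{0}, finite_singleton 0, singleton_nonempty 0, by simp⟩
  | succ k ih =>
    obtain ⟨S, hS, hSne, hAS⟩ := ih
    refine ⟨S + T (ℓ + k * p), hS.add (hT _), hSne.add (hTne _), ?_⟩
    rw [add_mul, one_mul, ← add_assoc, hsum, hAS, add_assoc]

lemma exists_eq_add_singleton_of_add_eq {J : ℕ} (hJ : ∀ j ≥ J, ∃ t, T j = {t})
    (hsum : ∀ j, A (j + p) = A j + T j) {j : ℕ} (hj : J ≤ j) (k : ℕ) :
    ∃ t, A (j + k * p) = A j + {t} := by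
  induction k with
  | zero => exact ⟨0, by simp⟩
  | succ k ih =>
    obtain ⟨t, ht⟩ := ih
    obtain ⟨t', ht'⟩ := hJ (j + k * p) (by omega)
    refine ⟨t + t', ?_⟩
    rw [add_mul, one_mul, ← add_assoc, hsum, ht, ht', add_assoc, singleton_add_singleton]

lemma eventually_exists_eq_singleton_of_add_eq (hA : ∀ j, (A j).Nonempty)
    {a b : ℤ} (hAab : ∀ j, A j ⊆ Icc a b) (hT : ∀ j, (T j).Finite)
    (hsum : ∀ j, A (j + p) = A j + T j) : ∃ J, ∀ j ≥ J, ∃ t, T j = {t} := by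
  have hAfin : ∀ j, (A j).Finite := fun j => (finite_Icc a b).subset (hAab j)
  have hTne := nonempty_of_add_eq hA hsum
  set w : ℕ → ℤ := fun k => ∑ i ∈ Finset.range p, spread (A (k + i))
  have hw : ∀ k, w (k + 1) = w k + spread (T k) := by
    intro k
    have h := (Finset.sum_range_succ' (fun i => spread (A (k + i))) p).symm.trans
      (Finset.sum_range_succ (fun i => spread (A (k + i))) p)
    simp only [add_zero, ← add_assoc, add_right_comm k _ 1] at h
    rw [hsum, spread_add (hA k) (hAfin k) (hTne k) (hT k)] at h
    simp only [w]
    linarith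
  have hmono : Monotone w :=
    monotone_nat_of_le_succ fun k => by linarith [hw k, spread_nonneg (hTne k) (hT k)]
  have hbdd : ∀ k, w k ≤ p * (b - a) := fun k =>
    calc w k ≤ ∑ _i ∈ Finset.range p, (b - a) :=
          Finset.sum_le_sum fun i _ => spread_le (hA (k + i)) (hAab (k + i))
      _ = p * (b - a) := by simp [mul_sub]
  obtain ⟨J, hJ⟩ := hmono.exists_forall_ge_eq hbdd
  refine ⟨J, fun k hk => exists_eq_singleton_of_spread_eq_zero (hTne k) (hT k) ?_⟩
  linarith [hw k, hJ k hk, hJ (k + 1) (by omega)]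

lemma exists_sepSets_sub_of_eq_add_add_singleton {S : ℕ → Set ℤ} {P : ℕ} (hP : 0 < P)
    (hA : ∀ j, (A j).Nonempty) (hAfin : ∀ j, (A j).Finite) (hS : ∀ ℓ, (S ℓ).Nonempty)
    (hSfin : ∀ ℓ, (S ℓ).Finite) (h : ∀ j, ∃ t, P ≤ j → A j = A (j % P) + S (j % P) + {t}) :
    ∃ β : ℕ → ℤ, (∀ j, β j ∈ A j) ∧ SEPSets fun j => A j - {β j} := by
  choose t ht using h
  set a : ℕ → ℤ := fun j => (hA j).some
  set s : ℕ → ℤ := fun ℓ => (hS ℓ).some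
  set β : ℕ → ℤ := fun j => if j < P then a j else a (j % P) + s (j % P) + t j
  have hβ_lt : ∀ j < P, β j = a j := fun j hj => if_pos hj
  refine ⟨β, fun j => ?_, P, hP, fun ℓ => A ℓ - {β ℓ}, fun ℓ => S ℓ - {s ℓ},
    fun ℓ _ => ⟨(hA ℓ).sub (singleton_nonempty _), (hAfin ℓ).sub (finite_singleton _),
      (hS ℓ).sub (singleton_nonempty _), (hSfin ℓ).sub (finite_singleton _)⟩,
    fun _ _ => rfl, fun j hj => ?_⟩
  · by_cases hj : j < P
    · rw [hβ_lt j hj]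
      exact (hA j).some_mem
    · simp only [β, if_neg hj]
      rw [ht j (not_lt.mp hj)]
      exact add_mem_add (add_mem_add (hA _).some_mem (hS _).some_mem) rfl
  · simp only
    rw [hβ_lt _ (Nat.mod_lt j hP), ht j hj, ← add_add_singleton_sub_singleton _ _ _ _ (t j)]
    simp [β, not_lt.mpr hj]

theorem exists_sepSets_sub_of_add_eq (hp : 0 < p) (hA : ∀ j, (A j).Nonempty) {a b : ℤ}
    (hAab : ∀ j, A j ⊆ Icc a b) (hT : ∀ j, (T j).Finite) (hsum : ∀ j, A (j + p) = A j + T j) :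
    ∃ β : ℕ → ℤ, (∀ j, β j ∈ A j) ∧ SEPSets fun j => A j - {β j} := by
  obtain ⟨J, hJ⟩ := eventually_exists_eq_singleton_of_add_eq hA hAab hT hsum
  have hTne := nonempty_of_add_eq hA hsum
  choose S hS hSne hAS using fun ℓ => exists_eq_add_of_add_eq hT hTne hsum ℓ (J + 1)
  -- with the period `P = (J + 1) p`, every `A j` with `j ≥ P` is a translate of `A (j % P + P)`
  set P := (J + 1) * p
  refine exists_sepSets_sub_of_eq_add_add_singleton (P := P) (by positivity) hA
    (fun j => (finite_Icc a b).subset (hAab j)) hSne hS fun j => ?_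
  by_cases hj : P ≤ j
  · obtain ⟨q, hq⟩ : ∃ q, j / P = q + 1 :=
      Nat.exists_eq_add_one.mpr (Nat.div_pos hj (by positivity))
    have hjP : j = (j % P + P) + q * (J + 1) * p := by
      have := Nat.mod_add_div j P
      rw [hq] at this
      simp only [P] at this ⊢
      linarith
    have hJP : J + 1 ≤ P := Nat.le_mul_of_pos_right _ hp
    obtain ⟨t, ht⟩ := exists_eq_add_singleton_of_add_eq hJ hsum
      (j := j % P + P) (by omega) (q * (J + 1))
    rw [← hjP, hAS] at ht
    exact ⟨t, fun _ => ht⟩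
  · exact ⟨0, fun h => absurd h hj⟩

end StronglyEventuallyPeriodic

theorem stmt_18_general (n : ℕ) (hn : 2 ≤ n) (D : Set ℤ)
    (hD : D ⊆ Set.Icc 0 ((n : ℤ) ^ 2))
    (hsparse : Sparse n (D - D))
    (α : ℕ → ℤ) (hα : ∀ j, α j ∈ D - D)
    (Cα : Set ℂ)
    (hCα : Cα = restrictedDigitSet n D ∩
      (restrictedDigitSet n D + {piSum (-(n : ℂ) + Complex.I) α}))
    (p : ℕ) (hp : 1 ≤ p) (N : ℕ) (v : Fin N → ℂ)
    (hattr : Cα = ⋃ i : Fin N,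
      (fun x => (-(n : ℂ) + Complex.I) ^ (-(p : ℤ)) * x + v i) '' Cα) :
    ∃ β : ℕ → ℤ, (∀ j, β j ∈ D ∩ (D + {α j})) ∧
      piSum (-(n : ℂ) + Complex.I) β ∈ Cα ∧
      SEPSets (fun j => (D ∩ (D + {α j})) - {β j}) := by
  have hA := fun j => inter_add_singleton_nonempty (hα j)
  rw [restrictedDigitSet_inter_add_eq hn hD hsparse hα] at hCα
  subst hCα
  obtain ⟨T, hT, hsum⟩ :=
    exists_add_eq_of_selfSimilar hn hD hsparse (fun _ => Set.inter_subset_left) hA hattr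
  obtain ⟨β, hβ, hsep⟩ :=
    exists_sepSets_sub_of_add_eq hp hA (fun _ => Set.inter_subset_left.trans hD) hT hsum
  exact ⟨β, hβ, Set.mem_image_of_mem _ (Set.mem_univ_pi.mpr hβ), hsep⟩

theorem stmt_18 (n : ℕ) (hn : 2 ≤ n) (D : Set ℤ)
    (hD : D ⊆ Set.Icc 0 ((n : ℤ) ^ 2))
    (hsparse : Sparse n (D - D))
    (α : ℕ → ℤ) (hα : ∀ j, α j ∈ D - D)
    (Cα : Set ℂ)
    (hCα : Cα = restrictedDigitSet n D ∩
      (restrictedDigitSet n D + {piSum (-(n : ℂ) + Complex.I) α}))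
    (p : ℕ) (hp : 1 ≤ p) (N : ℕ) (hN : 1 ≤ N) (v : Fin N → ℂ)
    (hattr : Cα = ⋃ i : Fin N,
      (fun x => (-(n : ℂ) + Complex.I) ^ (-(p : ℤ)) * x + v i) '' Cα) :
    ∃ β : ℕ → ℤ, (∀ j, β j ∈ D ∩ (D + {α j})) ∧
      piSum (-(n : ℂ) + Complex.I) β ∈ Cα ∧
      SEPSets (fun j => (D ∩ (D + {α j})) - {β j}) :=
  stmt_18_general n hn D hD hsparse α hα Cα hCα p hp N v hattr
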